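/- arXiv:2306.01866 — 4 statements merged into one kernel-verified Lean document; each statement's English description precedes it below -/
import Mathlib

section
/- Let (g, I_1, I_2, I_3) be a hyperkähler structure with Kähler forms ω_i, T a vector field preserving it with |T|² > 0, V = |T|⁻², θ the g-dual of T, x_i moment maps (dx_i = -ι_T ω_i). For a > 0 define I_i^a = I_i - (a²V/(a²+V)) θ ⊗ I_i T + a² dx_i ⊗ T. Then (I_i^a)² = -Id and I_1^a I_2^a = I_3^a, i.e., the three endomorphisms satisfy the quaternionic relations. -/
noncomputable section
open scoped RealInnerProductSpace

/-- The totally antisymmetric Levi-Civita symbol on `Fin 3`. -/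
def eps (i j k : Fin 3) : ℝ :=
  if (i, j, k) = (0, 1, 2) ∨ (i, j, k) = (1, 2, 0) ∨ (i, j, k) = (2, 0, 1) then 1
  else if (i, j, k) = (0, 2, 1) ∨ (i, j, k) = (2, 1, 0) ∨ (i, j, k) = (1, 0, 2) then -1
  else 0

/-- The deformed (Taub-NUT) complex structure
`I_i^a = I_i - (a²V/(a²+V)) θ ⊗ I_i T + a² dx_i ⊗ T`, where `V = |T|⁻²`, `θ = g(T,·)`
and `dx_i = -ι_T ω_i`, i.e. `dx_i(v) = -g(I_i T, v)`. -/
def Ideform {E : Type*} [NormedAddCommGroup E] [InnerProductSpace ℝ E]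
    (I : Fin 3 → E →L[ℝ] E) (T : E) (a : ℝ) (i : Fin 3) (v : E) : E :=
  I i v - (((a ^ 2 * (‖T‖ ^ 2)⁻¹) / (a ^ 2 + (‖T‖ ^ 2)⁻¹)) * ⟪T, v⟫) • I i T
    + (a ^ 2 * (-⟪I i T, v⟫)) • T

/-- the deformed endomorphisms `I_i^a` satisfy the quaternionic relations:
`(I_i^a)² = -Id` and `I_1^a I_2^a = I_3^a`. -/
theorem stmt4 {E : Type*} [NormedAddCommGroup E] [InnerProductSpace ℝ E]
    (I : Fin 3 → E →L[ℝ] E)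
    -- the complex structures are skew with respect to `g`
    (hskew : ∀ i (u v : E), ⟪I i u, v⟫ = -⟪u, I i v⟫)
    -- quaternionic relations `I_i I_j = ε_{ijk} I_k - δ_{ij}`
    (hquat : ∀ i j (v : E),
      I i (I j v) = (∑ k, eps i j k • I k v) - (if i = j then v else 0))
    (T : E) (hT : T ≠ 0) (a : ℝ) (ha : 0 < a) :
    (∀ (i : Fin 3) (v : E), Ideform I T a i (Ideform I T a i v) = -v) ∧
    (∀ v : E, Ideform I T a 0 (Ideform I T a 1 v) = Ideform I T a 2 v) := by
  have hns : (0:ℝ) < ‖T‖ ^ 2 := by have := norm_pos_iff.mpr hT; positivity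
  have hn : (‖T‖:ℝ) ^ 2 ≠ 0 := ne_of_gt hns
  have hden : a ^ 2 + (‖T‖ ^ 2)⁻¹ ≠ 0 := ne_of_gt (add_pos_of_pos_of_nonneg (by positivity) (by positivity))
  have hII : ∀ i (v : E), I i (I i v) = -v := by
    intro i v
    have heps : ∀ k, eps i i k = 0 := by
      intro k; fin_cases i <;> fin_cases k <;> simp [eps, Prod.ext_iff]
    simp [hquat i i v, heps]
  have hIT : ∀ i, ⟪T, I i T⟫ = 0 := by
    intro i
    have h := hskew i T T
    have h2 := real_inner_comm (I i T) T
    linarith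
  have hIT' : ∀ i, ⟪I i T, T⟫ = 0 := fun i => (real_inner_comm _ _).trans (hIT i)
  have hTIi : ∀ i (v : E), ⟪T, I i v⟫ = -⟪I i T, v⟫ := by
    intro i v; rw [hskew i T v]; ring
  have hIiIi : ∀ i (v : E), ⟪I i T, I i v⟫ = ⟪T, v⟫ := by
    intro i v; rw [hskew, hII, inner_neg_right, neg_neg]
  have h012 : ∀ v : E, I 0 (I 1 v) = I 2 v := by
    intro v
    simp [hquat 0 1 v, Fin.sum_univ_three, eps, Prod.ext_iff]
  have h01i : ∀ v : E, ⟪I 0 T, I 1 v⟫ = ⟪I 2 T, v⟫ := by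
    intro v
    rw [hskew, h012, hTIi]; ring
  constructor
  · intro i v
    simp only [Ideform, map_sub, map_add, map_smul, inner_sub_right, inner_add_right,
      real_inner_smul_right, hII, hIT, hIT', hTIi, hIiIi, real_inner_self_eq_norm_sq,
      inner_neg_right]
    match_scalars <;> field_simp <;> ring
  · intro v
    simp only [Ideform, map_sub, map_add, map_smul, inner_sub_right, inner_add_right,
      real_inner_smul_right, h012, h01i, hIT, hIT', hTIi, hIiIi, real_inner_self_eq_norm_sq,
      inner_neg_right]
    match_scalars <;> field_simp <;> ring
end
end

section
/- With the deformed complex structure I_j^a = I_j - (a²V/(a²+V)) θ ⊗ I_j T + a² dx_j ⊗ T, if α is any (1,0)-form with respect to I_j, then Ψ_j = α - i a² α(T) dx_j is a (1,0)-form with respect to I_j^a. -/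
/-!
Evaluating `Ψ` on `I_j^a v` with `α ∘ I_j = i α`, everything matches `i Ψ(v)` except a multiple
of `θ(v) α(T)`. It cancels because `dx_j(I_j^a v) = -(1 - c|T|²) θ(v)` (as `I_j` is orthogonal and
`dx_j(T) = 0`) and the coefficient `c = a²V/(a²+V)` is exactly the solution of
`c = a²(1 - c|T|²)`.
-/

noncomputable section
open scoped RealInnerProductSpace

/-- The deformed (Taub-NUT) complex structure
`I_j^a = I_j - (a²V/(a²+V)) θ ⊗ I_j T + a² dx_j ⊗ T`, where `V = |T|⁻²`, `θ = g(T,·)`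
and `dx_j(v) = -g(I_j T, v)` (i.e. `dx_j = -ι_T ω_j`). -/
def Jdeform {E : Type*} [NormedAddCommGroup E] [InnerProductSpace ℝ E]
    (J : E →L[ℝ] E) (T : E) (a : ℝ) (v : E) : E :=
  J v - (((a ^ 2 * (‖T‖ ^ 2)⁻¹) / (a ^ 2 + (‖T‖ ^ 2)⁻¹)) * ⟪T, v⟫) • J T
    + (a ^ 2 * (-⟪J T, v⟫)) • T

section Deform

variable {E : Type*} [NormedAddCommGroup E]

def deformCoeff (T : E) (a : ℝ) : ℝ :=
  a ^ 2 * (‖T‖ ^ 2)⁻¹ / (a ^ 2 + (‖T‖ ^ 2)⁻¹)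

theorem sq_mul_one_sub_deformCoeff_mul_norm_sq {T : E} (hT : T ≠ 0) (a : ℝ) :
    a ^ 2 * (1 - deformCoeff T a * ‖T‖ ^ 2) = deformCoeff T a := by
  have hnorm : 0 < ‖T‖ := norm_pos_iff.mpr hT
  have hden : a ^ 2 + (‖T‖ ^ 2)⁻¹ ≠ 0 := by positivity
  unfold deformCoeff
  field_simp
  ring

variable [InnerProductSpace ℝ E] {J : E →L[ℝ] E}

theorem real_inner_map_self_eq_zero_of_skew (hskew : ∀ u v : E, ⟪J u, v⟫ = -⟪u, J v⟫) (u : E) :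
    ⟪J u, u⟫ = 0 := by
  have h := hskew u u
  rw [real_inner_comm (J u) u] at h
  linarith

theorem real_inner_map_map_of_skew_of_sq_neg (hJ2 : ∀ v, J (J v) = -v)
    (hskew : ∀ u v : E, ⟪J u, v⟫ = -⟪u, J v⟫) (u v : E) :
    ⟪J u, J v⟫ = ⟪u, v⟫ := by
  rw [hskew, hJ2, inner_neg_right, neg_neg]

theorem Jdeform_eq (T : E) (a : ℝ) (v : E) :
    Jdeform J T a v = J v - (deformCoeff T a * ⟪T, v⟫) • J T + (a ^ 2 * (-⟪J T, v⟫)) • T :=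
  rfl

theorem sq_mul_inner_map_Jdeform (hJ2 : ∀ v, J (J v) = -v)
    (hskew : ∀ u v : E, ⟪J u, v⟫ = -⟪u, J v⟫) {T : E} (hT : T ≠ 0) (a : ℝ) (v : E) :
    a ^ 2 * ⟪J T, Jdeform J T a v⟫ = deformCoeff T a * ⟪T, v⟫ := by
  have hinner : ⟪J T, Jdeform J T a v⟫ = ⟪T, v⟫ * (1 - deformCoeff T a * ‖T‖ ^ 2) := by
    rw [Jdeform_eq, inner_add_right, inner_sub_right, inner_smul_right, inner_smul_right,
      real_inner_map_map_of_skew_of_sq_neg hJ2 hskew,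
      real_inner_map_map_of_skew_of_sq_neg hJ2 hskew,
      real_inner_map_self_eq_zero_of_skew hskew, real_inner_self_eq_norm_sq]
    ring
  rw [hinner, mul_left_comm, sq_mul_one_sub_deformCoeff_mul_norm_sq hT, mul_comm]

theorem map_Jdeform (α : E →L[ℝ] ℂ) (hα : ∀ v, α (J v) = Complex.I * α v)
    (T : E) (a : ℝ) (v : E) :
    α (Jdeform J T a v) = Complex.I * α v - Complex.I * (deformCoeff T a * ⟪T, v⟫ : ℝ) * α T
      + (a ^ 2 * (-⟪J T, v⟫) : ℝ) * α T := by
  rw [Jdeform_eq, map_add, map_sub, map_smul, map_smul, hα, hα, Complex.real_smul,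
    Complex.real_smul]
  ring

end Deform

theorem stmt5_general {E : Type*} [NormedAddCommGroup E] [InnerProductSpace ℝ E]
    (J : E →L[ℝ] E)
    (hJ2 : ∀ v, J (J v) = -v)
    (hskew : ∀ u v : E, ⟪J u, v⟫ = -⟪u, J v⟫)
    (T : E) (hT : T ≠ 0) (a : ℝ)
    (α : E →L[ℝ] ℂ)
    -- α is of type (1,0) with respect to J
    (hα : ∀ v, α (J v) = Complex.I * α v) :
    ∀ v : E,
      (α (Jdeform J T a v)
          - Complex.I * (a ^ 2 : ℂ) * α T * ((-⟪J T, Jdeform J T a v⟫ : ℝ) : ℂ))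
        = Complex.I *
          (α v - Complex.I * (a ^ 2 : ℂ) * α T * ((-⟪J T, v⟫ : ℝ) : ℂ)) := by
  intro v
  have hdx : (a : ℂ) ^ 2 * (⟪J T, Jdeform J T a v⟫ : ℝ) = (deformCoeff T a * ⟪T, v⟫ : ℝ) := by
    exact_mod_cast sq_mul_inner_map_Jdeform hJ2 hskew hT a v
  rw [map_Jdeform α hα]
  push_cast at hdx ⊢
  linear_combination (Complex.I * α T) * hdx - (a ^ 2 * α T * ⟪J T, v⟫) * Complex.I_sq

/-- if `α` is a `(1,0)`-form for `I_j`, then `Ψ_j = α - i a² α(T) dx_j`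
is a `(1,0)`-form for the deformed structure `I_j^a`, for every `a ≥ 0`. -/
theorem stmt5 {E : Type*} [NormedAddCommGroup E] [InnerProductSpace ℝ E]
    (J : E →L[ℝ] E)
    (hJ2 : ∀ v, J (J v) = -v)
    (hskew : ∀ u v : E, ⟪J u, v⟫ = -⟪u, J v⟫)
    (T : E) (hT : T ≠ 0) (a : ℝ) (ha : 0 ≤ a)
    (α : E →L[ℝ] ℂ)
    -- α is of type (1,0) with respect to J
    (hα : ∀ v, α (J v) = Complex.I * α v) :
    ∀ v : E,
      (α (Jdeform J T a v)
          - Complex.I * (a ^ 2 : ℂ) * α T * ((-⟪J T, Jdeform J T a v⟫ : ℝ) : ℂ))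
        = Complex.I *
          (α v - Complex.I * (a ^ 2 : ℂ) * α T * ((-⟪J T, v⟫ : ℝ) : ℂ)) :=
  stmt5_general J hJ2 hskew T hT a α hα
end
end

section
/- Under the ODE system r' = 4x₁, x₁' = F with C⁻¹ r ≤ F ≤ C r (C > 1), r > 0, if x₁(0) = 0 and x₁(τ*) = X > 0 for τ* > 0, then τ* ≤ C·X / r(0). -/
/-- for the ODE system `r' = 4x₁`, `x₁' = F` with
`C⁻¹ r ≤ F ≤ C r` (`C > 1`, `r > 0`), if `x₁(0) = 0` and `x₁(τ*) = X > 0` with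
`τ* > 0`, then `τ* ≤ C·X / r(0)`. -/
theorem stmt11 (C : ℝ) (hC : 1 < C) (r x₁ F : ℝ → ℝ)
    (hr : ∀ τ, 0 < r τ)
    (hFl : ∀ τ, C⁻¹ * r τ ≤ F τ) (hFu : ∀ τ, F τ ≤ C * r τ)
    (hr' : ∀ τ, HasDerivAt r (4 * x₁ τ) τ)
    (hx' : ∀ τ, HasDerivAt x₁ (F τ) τ)
    (τs X : ℝ) (hτs : 0 < τs) (hX : 0 < X)
    (h0 : x₁ 0 = 0) (hXs : x₁ τs = X) :
    τs ≤ C * X / r 0 := by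
  have hC0 : (0:ℝ) < C := lt_trans one_pos hC
  have hCinv : (0:ℝ) < C⁻¹ := inv_pos.mpr hC0
  -- x₁ is monotone (derivative F ≥ 0)
  have hx₁mono : Monotone x₁ := by
    have hdiff : Differentiable ℝ x₁ := fun t => (hx' t).differentiableAt
    apply monotone_of_deriv_nonneg hdiff
    intro t
    rw [(hx' t).deriv]
    exact le_trans (le_of_lt (mul_pos hCinv (hr t))) (hFl t)
  have hx₁nonneg : ∀ t, 0 ≤ t → 0 ≤ x₁ t := fun t ht => h0 ▸ hx₁mono ht
  -- r is monotone on Ici 0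
  have hrmono : MonotoneOn r (Set.Ici (0:ℝ)) := by
    apply monotoneOn_of_deriv_nonneg (convex_Ici 0)
      (fun t _ => (hr' t).differentiableAt.continuousAt.continuousWithinAt)
      (fun t _ => (hr' t).differentiableAt.differentiableWithinAt)
    intro t ht
    rw [(hr' t).deriv]
    have ht0 : (0:ℝ) < t := by simpa [interior_Ici] using ht
    have := hx₁nonneg t ht0.le
    linarith
  -- g t = C⁻¹ * r 0 * t - x₁ t is antitone on Ici 0
  set g : ℝ → ℝ := fun t => C⁻¹ * r 0 * t - x₁ t with hg
  have hg' : ∀ t, HasDerivAt g (C⁻¹ * r 0 - F t) t := by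
    intro t
    have h1 : HasDerivAt (fun t : ℝ => C⁻¹ * r 0 * t) (C⁻¹ * r 0) t := by
      simpa using (hasDerivAt_id t).const_mul (C⁻¹ * r 0)
    exact h1.sub (hx' t)
  have hganti : AntitoneOn g (Set.Ici (0:ℝ)) := by
    apply antitoneOn_of_deriv_nonpos (convex_Ici 0)
      (fun t _ => (hg' t).differentiableAt.continuousAt.continuousWithinAt)
      (fun t _ => (hg' t).differentiableAt.differentiableWithinAt)
    intro t ht
    rw [(hg' t).deriv]
    have ht0 : (0:ℝ) < t := by simpa [interior_Ici] using ht
    have h1 : r 0 ≤ r t := hrmono Set.self_mem_Ici (le_of_lt ht0) ht0.le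
    have h2 : C⁻¹ * r t ≤ F t := hFl t
    nlinarith
  have hkey : g τs ≤ g 0 := hganti Set.self_mem_Ici (le_of_lt hτs) hτs.le
  have hg0 : g 0 = 0 := by simp [hg, h0]
  have hgτ : g τs = C⁻¹ * r 0 * τs - X := by simp [hg, hXs]
  have hr0 : 0 < r 0 := hr 0
  rw [hgτ, hg0] at hkey
  rw [le_div_iff₀ hr0]
  have : C⁻¹ * r 0 * τs ≤ X := by linarith
  calc τs * r 0 = C * (C⁻¹ * r 0 * τs) := by field_simp
    _ ≤ C * X := by nlinarith
end

section
/- On the cone over S = SO(l)/(SO(l-4)×Sp(1)) realized as N(ℍ)/Sp(1) with N(ℍ) = {u ∈ ℍ^l : the four real component vectors u⁰,u¹,u²,u³ ∈ ℝ^l are mutually orthogonal of norm 1/2}, let T' be generated by the block-diagonal rotation with integer weights b₁,…,b_s and T_q(u) = uq for 0 ≠ q ∈ Im ℍ. Then |T'|²|T_q|² - ⟨T', T_q⟩² ≥ |q|² Σ_{β<γ} (|b_β| - |b_γ|)² (|u_{2β-1}|² + |u_{2β}|²)(|u_{2γ-1}|² + |u_{2γ}|²); in particular, if the |b_β| are pairwise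 distinct, T' is nowhere tangent to the Sp(1)-orbits on N(ℍ), so the induced S¹-action on SO(l)/(SO(l-4)×Sp(1)) is locally free. -/
/-!
Write `m_β = |u_{2β-1}|² + |u_{2β}|²` (`pairNormSq u β`). Then `|T'|² = Σ b_β² m_β` and
`|T_q|² ≥ |q|² Σ m_β`.
Right multiplication by an imaginary `q` is skew, so `⟨T', T_q⟩ = Σ 2 b_β ⟨u_{2β}, u_{2β-1} q⟩`,
which Cauchy–Schwarz and AM–GM bound by `|q| Σ |b_β| m_β`. The weighted Lagrange identity
`(Σ a² m)(Σ m) - (Σ a m)² = Σ_{β<γ} (a_β - a_γ)² m_β m_γ` with `a_β = |b_β|` gives the estimate.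
On `N(ℍ)` the four vectors `2u^p ∈ ℝ^l` are orthonormal, so `u` has at least four nonzero
coordinates; as `t ≤ 1`, two distinct pairs have `m_β ≠ 0`, and distinct `|b_β|` make the
right-hand side positive.
-/

noncomputable section

/-- The real Euclidean inner product on `ℍ ≅ ℝ⁴`: `⟨x,y⟩ = Re(x ȳ)`. -/
def qdot (x y : Quaternion ℝ) : ℝ := (x * star y).re

/-- The four real components of a quaternion (the vectors `u⁰,u¹,u²,u³`). -/
def qcomp : Fin 4 → Quaternion ℝ → ℝ
  | 0 => fun x => x.re
  | 1 => fun x => x.imI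
  | 2 => fun x => x.imJ
  | 3 => fun x => x.imK

/-- Coordinates of `ℍ^l` with `l = 2s + t`: the `s` pairs `(u_{2β-1}, u_{2β})` are
indexed by `Fin s × Fin 2` and the `t ≤ 1` remaining coordinates by `Fin t`. -/
abbrev qIdx (s t : ℕ) := (Fin s × Fin 2) ⊕ Fin t

/-- The generator `T'` of the weighted block-diagonal rotation with integer weights
`b₁,…,b_s`: on the pair `(u_{2β-1}, u_{2β})` it acts as `(b_β u_{2β}, -b_β u_{2β-1})`,
and it vanishes on the remaining coordinate. -/
def Tw {s t : ℕ} (b : Fin s → ℤ) (u : qIdx s t → Quaternion ℝ) :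
    qIdx s t → Quaternion ℝ := fun α =>
  match α with
  | Sum.inl (β, c) =>
      if c = 0 then ((b β : ℝ)) • u (Sum.inl (β, 1))
      else (-(b β : ℝ)) • u (Sum.inl (β, 0))
  | Sum.inr _ => 0

/-- The generator of the right `Sp(1)`-multiplication: `T_q(u) = u q`. -/
def Tq {s t : ℕ} (u : qIdx s t → Quaternion ℝ) (q : Quaternion ℝ) :
    qIdx s t → Quaternion ℝ := fun α => u α * q

open Finset Quaternion

theorem sum_eq_two_nsmul_sum_filter_lt_of_symm {ι M : Type*} [Fintype ι] [LinearOrder ι]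
    [AddCommMonoid M] (F : ι × ι → M) (hsymm : ∀ i j, F (j, i) = F (i, j))
    (hdiag : ∀ i, F (i, i) = 0) :
    ∑ p, F p = 2 • ∑ p ∈ univ.filter (fun p : ι × ι => p.1 < p.2), F p := by
  have hsplit : ∀ p : ι × ι,
      F p = (if p.1 < p.2 then F p else 0) + (if p.2 < p.1 then F p else 0) := by
    rintro ⟨i, j⟩
    rcases lt_trichotomy i j with h | rfl | h
    · simp [h, h.not_gt]
    · simp [hdiag]
    · simp [h, h.not_gt]
  have hswap : ∑ p : ι × ι, (if p.2 < p.1 then F p else 0)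
      = ∑ p : ι × ι, (if p.1 < p.2 then F p else 0) :=
    Fintype.sum_equiv (Equiv.prodComm ι ι) _ _ fun ⟨i, j⟩ => by simp [hsymm]
  rw [Fintype.sum_congr _ _ hsplit, sum_add_distrib, hswap, sum_filter, two_nsmul]

theorem sum_sq_mul_mul_sum_sub_sq {ι K : Type*} [Fintype ι] [LinearOrder ι] [Field K]
    [CharZero K] (a m : ι → K) :
    (∑ i, a i ^ 2 * m i) * (∑ i, m i) - (∑ i, a i * m i) ^ 2
      = ∑ p ∈ univ.filter (fun p : ι × ι => p.1 < p.2), (a p.1 - a p.2) ^ 2 * m p.1 * m p.2 := by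
  have hexpand : ∀ i j, (a i - a j) ^ 2 * m i * m j
      = a i ^ 2 * m i * m j + m i * (a j ^ 2 * m j) - 2 * ((a i * m i) * (a j * m j)) :=
    fun i j => by ring
  have hfull : ∑ p : ι × ι, (a p.1 - a p.2) ^ 2 * m p.1 * m p.2
      = 2 * ((∑ i, a i ^ 2 * m i) * (∑ i, m i) - (∑ i, a i * m i) ^ 2) := by
    simp_rw [Fintype.sum_prod_type, hexpand, sum_sub_distrib, sum_add_distrib, ← mul_sum,
      ← sum_mul]
    ring
  have hhalf := sum_eq_two_nsmul_sum_filter_lt_of_symm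
    (fun p : ι × ι => (a p.1 - a p.2) ^ 2 * m p.1 * m p.2) (fun i j => by ring) (fun i => by ring)
  rw [two_nsmul] at hhalf
  linear_combination (hhalf - hfull) / 2

theorem sum_filter_lt_sq_sub_mul_mul_pos {ι : Type*} [Fintype ι] [LinearOrder ι] {a m : ι → ℝ}
    (hm : ∀ i, 0 ≤ m i) {i j : ι} (hij : i ≠ j) (ha : a i ≠ a j) (hmi : m i ≠ 0)
    (hmj : m j ≠ 0) :
    0 < ∑ p ∈ univ.filter (fun p : ι × ι => p.1 < p.2), (a p.1 - a p.2) ^ 2 * m p.1 * m p.2 := by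
  wlog hlt : i < j generalizing i j
  · exact this hij.symm ha.symm hmj hmi (lt_of_le_of_ne (not_lt.1 hlt) hij.symm)
  refine sum_pos' (fun p _ => by have := hm p.1; have := hm p.2; positivity)
    ⟨(i, j), mem_filter.2 ⟨mem_univ _, hlt⟩, ?_⟩
  have := (hm i).lt_of_ne' hmi
  have := (hm j).lt_of_ne' hmj
  have := sub_ne_zero.2 ha
  positivity

theorem qdot_eq_inner (x y : ℍ[ℝ]) : qdot x y = inner ℝ x y := (inner_def x y).symm

theorem qdot_self (x : ℍ[ℝ]) : qdot x x = normSq x := by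
  rw [qdot_eq_inner, Quaternion.inner_self]

theorem qdot_zero_left (x : ℍ[ℝ]) : qdot 0 x = 0 := by
  rw [qdot, zero_mul, re_zero]

theorem qdot_smul_left (r : ℝ) (x y : ℍ[ℝ]) : qdot (r • x) y = r * qdot x y := by
  simp only [qdot_eq_inner, real_inner_smul_left]

theorem qdot_mul_right_eq_neg_of_re_eq_zero (x y q : ℍ[ℝ]) (hq : q.re = 0) :
    qdot y (x * q) = -qdot x (y * q) := by
  simp only [qdot, re_mul, imI_mul, imJ_mul, imK_mul, re_star, imI_star, imJ_star, imK_star, hq]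
  ring

theorem two_mul_abs_qdot_mul_right_le (x y q : ℍ[ℝ]) :
    2 * |qdot x (y * q)| ≤ ‖q‖ * (normSq x + normSq y) := by
  have hcs : |qdot x (y * q)| ≤ ‖x‖ * ‖y‖ * ‖q‖ := by
    rw [qdot_eq_inner, mul_assoc, ← norm_mul]
    exact abs_real_inner_le_norm x (y * q)
  have hamgm : 2 * (‖x‖ * ‖y‖) ≤ normSq x + normSq y := by
    rw [normSq_eq_norm_mul_self, normSq_eq_norm_mul_self]
    nlinarith [sq_nonneg (‖x‖ - ‖y‖)]
  nlinarith [norm_nonneg q]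

theorem four_le_card_of_qcomp_orthonormal {ι : Type*} [Fintype ι] (u : ι → ℍ[ℝ])
    (hu : ∀ p p' : Fin 4, ∑ α, qcomp p (u α) * qcomp p' (u α) = if p = p' then (1/4 : ℝ) else 0)
    (S : Finset ι) (hS : ∀ α ∉ S, u α = 0) : 4 ≤ S.card := by
  have hzero : ∀ p, qcomp p 0 = 0 := by
    intro p; fin_cases p <;> rfl
  let v : Fin 4 → EuclideanSpace ℝ S := fun p => WithLp.toLp 2 fun α => 2 * qcomp p (u α)
  have hv : Orthonormal ℝ v := by
    rw [orthonormal_iff_ite]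
    intro p p'
    have hsum : ∑ α ∈ S, qcomp p' (u α) * qcomp p (u α)
        = ∑ α, qcomp p' (u α) * qcomp p (u α) :=
      sum_subset (subset_univ S) fun α _ hα => by rw [hS α hα, hzero, zero_mul]
    simp only [v, PiLp.inner_apply, RCLike.inner_apply, conj_trivial]
    rw [sum_coe_sort S fun α => 2 * qcomp p' (u α) * (2 * qcomp p (u α))]
    have h4 : ∀ α, 2 * qcomp p' (u α) * (2 * qcomp p (u α))
        = 4 * (qcomp p' (u α) * qcomp p (u α)) := fun α => by ring
    simp_rw [h4, ← mul_sum, hsum, hu p' p, eq_comm (a := p')]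
    split_ifs <;> norm_num
  simpa using hv.linearIndependent.fintype_card_le_finrank

section WeightedRotation

variable {s t : ℕ} (b : Fin s → ℤ) (u : qIdx s t → ℍ[ℝ])

def pairNormSq (β : Fin s) : ℝ := normSq (u (Sum.inl (β, 0))) + normSq (u (Sum.inl (β, 1)))

theorem pairNormSq_nonneg (β : Fin s) : 0 ≤ pairNormSq u β :=
  add_nonneg normSq_nonneg normSq_nonneg

theorem sum_qIdx {M : Type*} [AddCommMonoid M] (f : qIdx s t → M) :
    ∑ α, f α = ∑ β, (f (Sum.inl (β, 0)) + f (Sum.inl (β, 1))) + ∑ j, f (Sum.inr j) := by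
  rw [Fintype.sum_sum_type, Fintype.sum_prod_type]
  simp only [Fin.sum_univ_two]

theorem sum_normSq_eq_sum_pairNormSq_add : ∑ α, normSq (u α) = ∑ β, pairNormSq u β + ∑ j, normSq (u (Sum.inr j)) :=
  sum_qIdx _

theorem Tw_inl_zero (β : Fin s) : Tw b u (Sum.inl (β, 0)) = (b β : ℝ) • u (Sum.inl (β, 1)) :=
  rfl

theorem Tw_inl_one (β : Fin s) : Tw b u (Sum.inl (β, 1)) = -(b β : ℝ) • u (Sum.inl (β, 0)) :=
  rfl

theorem Tw_inr (j : Fin t) : Tw b u (Sum.inr j) = 0 := rfl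

theorem sum_qdot_Tw_self :
    ∑ α, qdot (Tw b u α) (Tw b u α) = ∑ β, (b β : ℝ) ^ 2 * pairNormSq u β := by
  simp only [sum_qIdx, Tw_inl_zero, Tw_inl_one, Tw_inr, qdot_self, normSq_smul, map_zero,
    sum_const_zero, add_zero, neg_sq]
  exact sum_congr rfl fun β _ => by rw [pairNormSq]; ring

theorem sum_qdot_Tq_self (q : ℍ[ℝ]) :
    ∑ α, qdot (Tq u q α) (Tq u q α) = normSq q * ∑ α, normSq (u α) := by
  simp only [Tq, qdot_self, map_mul, mul_sum, mul_comm]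

theorem sum_qdot_Tw_Tq {q : ℍ[ℝ]} (hq : q.re = 0) :
    ∑ α, qdot (Tw b u α) (Tq u q α)
      = ∑ β, 2 * (b β : ℝ) * qdot (u (Sum.inl (β, 1))) (u (Sum.inl (β, 0)) * q) := by
  simp only [sum_qIdx, Tw_inl_zero, Tw_inl_one, Tw_inr, Tq, qdot_smul_left, qdot_zero_left,
    sum_const_zero, add_zero]
  refine sum_congr rfl fun β _ => ?_
  rw [qdot_mul_right_eq_neg_of_re_eq_zero (u (Sum.inl (β, 1))) (u (Sum.inl (β, 0))) q hq]
  ring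

theorem eq_zero_of_pairNormSq_eq_zero {β : Fin s} (h : pairNormSq u β = 0) (c : Fin 2) :
    u (Sum.inl (β, c)) = 0 := by
  obtain ⟨h0, h1⟩ := (add_eq_zero_iff_of_nonneg normSq_nonneg normSq_nonneg).1 h
  fin_cases c
  · exact normSq_eq_zero.1 h0
  · exact normSq_eq_zero.1 h1

theorem abs_sum_qdot_Tw_Tq_le {q : ℍ[ℝ]} (hq : q.re = 0) :
    |∑ α, qdot (Tw b u α) (Tq u q α)| ≤ ‖q‖ * ∑ β, |(b β : ℝ)| * pairNormSq u β := by
  rw [sum_qdot_Tw_Tq b u hq, mul_sum]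
  refine (abs_sum_le_sum_abs _ _).trans (sum_le_sum fun β _ => ?_)
  have h := two_mul_abs_qdot_mul_right_le (u (Sum.inl (β, 1))) (u (Sum.inl (β, 0))) q
  rw [abs_mul, abs_mul, abs_two, pairNormSq]
  calc 2 * |(b β : ℝ)| * |qdot (u (Sum.inl (β, 1))) (u (Sum.inl (β, 0)) * q)|
      = |(b β : ℝ)| * (2 * |qdot (u (Sum.inl (β, 1))) (u (Sum.inl (β, 0)) * q)|) := by ring
    _ ≤ |(b β : ℝ)| * (‖q‖ * (normSq (u (Sum.inl (β, 1))) + normSq (u (Sum.inl (β, 0))))) :=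
      mul_le_mul_of_nonneg_left h (abs_nonneg _)
    _ = _ := by ring

theorem gram_Tw_Tq_ge {q : ℍ[ℝ]} (hq : q.re = 0) :
    (∑ α, qdot (Tw b u α) (Tw b u α)) * (∑ α, qdot (Tq u q α) (Tq u q α))
        - (∑ α, qdot (Tw b u α) (Tq u q α)) ^ 2
      ≥ qdot q q * ∑ p ∈ univ.filter (fun p : Fin s × Fin s => p.1 < p.2),
          (|(b p.1 : ℝ)| - |(b p.2 : ℝ)|) ^ 2 * pairNormSq u p.1 * pairNormSq u p.2 := by
  have hA : ∑ α, qdot (Tw b u α) (Tw b u α) = ∑ β, |(b β : ℝ)| ^ 2 * pairNormSq u β := by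
    simp only [sum_qdot_Tw_self, sq_abs]
  have hA0 : 0 ≤ ∑ β, |(b β : ℝ)| ^ 2 * pairNormSq u β :=
    sum_nonneg fun β _ => mul_nonneg (sq_nonneg _) (pairNormSq_nonneg u β)
  have hB : normSq q * ∑ β, pairNormSq u β ≤ ∑ α, qdot (Tq u q α) (Tq u q α) := by
    rw [sum_qdot_Tq_self, sum_normSq_eq_sum_pairNormSq_add]
    exact mul_le_mul_of_nonneg_left
      (le_add_of_nonneg_right (sum_nonneg fun j _ => normSq_nonneg)) normSq_nonneg
  have hC : (∑ α, qdot (Tw b u α) (Tq u q α)) ^ 2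
      ≤ normSq q * (∑ β, |(b β : ℝ)| * pairNormSq u β) ^ 2 := by
    rw [← sq_abs, normSq_eq_norm_mul_self, ← sq, ← mul_pow]
    exact pow_le_pow_left₀ (abs_nonneg _) (abs_sum_qdot_Tw_Tq_le b u hq) 2
  have hlag : (∑ β, |(b β : ℝ)| ^ 2 * pairNormSq u β) * (∑ β, pairNormSq u β)
        - (∑ β, |(b β : ℝ)| * pairNormSq u β) ^ 2
      = ∑ p ∈ univ.filter (fun p : Fin s × Fin s => p.1 < p.2),
          (|(b p.1 : ℝ)| - |(b p.2 : ℝ)|) ^ 2 * pairNormSq u p.1 * pairNormSq u p.2 :=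
    sum_sq_mul_mul_sum_sub_sq _ _
  rw [qdot_self, ← hlag, hA]
  linarith [mul_le_mul_of_nonneg_left hB hA0]

theorem exists_ne_pairNormSq_ne_zero (ht : t ≤ 1)
    (hu : ∀ p p' : Fin 4,
      ∑ α, qcomp p (u α) * qcomp p' (u α) = if p = p' then (1/4 : ℝ) else 0) :
    ∃ β γ, β ≠ γ ∧ pairNormSq u β ≠ 0 ∧ pairNormSq u γ ≠ 0 := by
  by_contra! h
  set B := univ.filter fun β => pairNormSq u β ≠ 0
  have hB : B.card ≤ 1 := card_le_one.2 fun β hβ γ hγ => by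
    by_contra hne
    exact (mem_filter.1 hγ).2 (h β γ hne (mem_filter.1 hβ).2)
  have hsupp : ∀ α ∉ (B ×ˢ (univ : Finset (Fin 2))).disjSum (univ : Finset (Fin t)), u α = 0 := by
    rintro (⟨β, c⟩ | j) hα
    · exact eq_zero_of_pairNormSq_eq_zero u (by simpa [B] using hα) c
    · simp at hα
  have := four_le_card_of_qcomp_orthonormal u hu _ hsupp
  rw [card_disjSum, card_product, card_univ, card_univ, Fintype.card_fin, Fintype.card_fin] at this
  omega

end WeightedRotation

/-- on `N(ℍ) ⊂ ℍ^l` (`l = 2s + t`, `t ≤ 1`), with `T'` the weighted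
rotation field and `T_q(u) = uq` (`q ∈ Im ℍ`), one has
`|T'|²|T_q|² - ⟨T',T_q⟩² ≥ |q|² Σ_{β<γ} (|b_β|-|b_γ|)² (|u_{2β-1}|²+|u_{2β}|²)(|u_{2γ-1}|²+|u_{2γ}|²)`;
in particular, if the `|b_β|` are pairwise distinct and `u ∈ N(ℍ)` (the four component
vectors `u⁰,u¹,u²,u³ ∈ ℝ^l` are orthogonal of square norm `1/4`), then `T'` is nowhere
tangent to the `Sp(1)`-orbits: `⟨T',T_q⟩² < |T'|²|T_q|²` for all `0 ≠ q ∈ Im ℍ`,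
so the induced `S¹`-action on `SO(l)/(SO(l-4)×Sp(1))` is locally free. -/
theorem stmt19 (s t : ℕ) (ht : t ≤ 1) (b : Fin s → ℤ)
    (u : qIdx s t → Quaternion ℝ) :
    (∀ q : Quaternion ℝ, q.re = 0 →
      (∑ α, qdot (Tw b u α) (Tw b u α)) * (∑ α, qdot (Tq u q α) (Tq u q α))
          - (∑ α, qdot (Tw b u α) (Tq u q α)) ^ 2
        ≥ qdot q q *
            ∑ p ∈ Finset.univ.filter (fun p : Fin s × Fin s => p.1 < p.2),
              (|(b p.1 : ℝ)| - |(b p.2 : ℝ)|) ^ 2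
                * (Quaternion.normSq (u (Sum.inl (p.1, 0)))
                    + Quaternion.normSq (u (Sum.inl (p.1, 1))))
                * (Quaternion.normSq (u (Sum.inl (p.2, 0)))
                    + Quaternion.normSq (u (Sum.inl (p.2, 1))))) ∧
    ((∀ β γ : Fin s, β ≠ γ → (b β).natAbs ≠ (b γ).natAbs) →
      (∀ p p' : Fin 4,
        (∑ α, qcomp p (u α) * qcomp p' (u α)) = if p = p' then (1/4 : ℝ) else 0) →
      ∀ q : Quaternion ℝ, q.re = 0 → q ≠ 0 →
        (∑ α, qdot (Tw b u α) (Tq u q α)) ^ 2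
          < (∑ α, qdot (Tw b u α) (Tw b u α)) * (∑ α, qdot (Tq u q α) (Tq u q α))) := by
  refine ⟨fun q hq => gram_Tw_Tq_ge b u hq, fun hb hu q hq hq0 => ?_⟩
  obtain ⟨β, γ, hne, hβ, hγ⟩ := exists_ne_pairNormSq_ne_zero u ht hu
  have habs : |(b β : ℝ)| ≠ |(b γ : ℝ)| := by
    have := hb β γ hne
    rw [← Int.cast_abs, ← Int.cast_abs, Ne, Int.cast_inj, abs_eq_abs]
    omega
  have hgap := sum_filter_lt_sq_sub_mul_mul_pos (a := fun β => |(b β : ℝ)|)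
    (pairNormSq_nonneg u) hne habs hβ hγ
  have hq2 : 0 < qdot q q := by rw [qdot_self]; exact normSq_nonneg.lt_of_ne' (normSq_ne_zero.2 hq0)
  linarith [gram_Tw_Tq_ge b u hq, mul_pos hq2 hgap]
end
end
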